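/- Let f = (u, v, s, t) : ℝ⁴ → ℝ⁴ be anti-i-holomorphic, and let p ∈ ℝ⁴ be a point at which u_y·u_z − u_x·u_w = −s_y·s_z + s_x·s_w (equivalently, ⟨∂f/∂y(p), ∂f/∂z(p)⟩ = 0 = ⟨∂f/∂x(p), ∂f/∂w(p)⟩). Then Γ_f has equal Kähler angles at p, with cos²θ = [(s_x − u_z)² + (s_y − u_w)²] / [(1 + ‖∂f/∂x‖²)(1 + ‖∂f/∂z‖²) − ⟨∂f/∂x, ∂f/∂z⟩²], all partial derivatives being evaluated at p (the denominator is ≥ 1 by Cauchy–Schwarz). -/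

import Mathlib

/-!
STATEMENT 4: If `f = (u,v,s,t) : ℝ⁴ → ℝ⁴` is anti-i-holomorphic and at `p` one has
`⟨∂f/∂y, ∂f/∂z⟩ = 0 = ⟨∂f/∂x, ∂f/∂w⟩`, then the graph `Γ_f` has equal Kähler
angles at `p` with
`cos²θ = [(s_x − u_z)² + (s_y − u_w)²] /
         [(1 + ‖∂f/∂x‖²)(1 + ‖∂f/∂z‖²) − ⟨∂f/∂x, ∂f/∂z⟩²]`.
Equal Kähler angles at `p` with angle `θ` means that
`S_p = (id + Df(p)ᵀ∘Df(p))⁻¹ ∘ (Df(p)ᵀ − Df(p))` satisfies `S_p∘S_p = −cos²θ·id`.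
-/

open scoped RealInnerProductSpace

noncomputable section

abbrev E4 : Type := EuclideanSpace ℝ (Fin 4)

/-- standard basis vectors of ℝ⁴ -/
noncomputable def e (j : Fin 4) : E4 := EuclideanSpace.single j (1 : ℝ)

/-- The orthogonal complex structure `i(x,y,z,w) = (−y, x, −w, z)` of ℝ⁴. -/
noncomputable def iC : E4 →L[ℝ] E4 :=
  LinearMap.toContinuousLinearMap
    (Matrix.toEuclideanLin (!![0,-1,0,0; 1,0,0,0; 0,0,0,-1; 0,0,1,0] : Matrix (Fin 4) (Fin 4) ℝ))

/-- The endomorphism `S_p = (id + Df(p)ᵀ ∘ Df(p))⁻¹ ∘ (Df(p)ᵀ − Df(p))` of ℝ⁴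
(the inverse taken in the ring of continuous endomorphisms; `id + Df(p)ᵀ∘Df(p)` is
positive definite, hence invertible). -/
noncomputable def Sp (f : E4 → E4) (p : E4) : E4 →L[ℝ] E4 :=
  Ring.inverse (1 + ContinuousLinearMap.adjoint (fderiv ℝ f p) * fderiv ℝ f p) *
    (ContinuousLinearMap.adjoint (fderiv ℝ f p) - fderiv ℝ f p)


/-
Anti-`i`-linearity determines `D = Df(p)` by `x = D e₀` and `z = D e₂`: its columns are
`x, -i x, z, -i z`. Then `G = 1 + DᵀD` commutes with `i` and is a Hermitian `2 × 2` complex matrix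
on `(ℝ⁴, i) ≅ ℂ²`, so by Cayley–Hamilton `G² = t G - δ` with `t = 2 + ‖x‖² + ‖z‖²` and
`δ = (1 + ‖x‖²)(1 + ‖z‖²) - ⟪x, z⟫² - ⟪i x, z⟫² > 0`. The skew part `B = Dᵀ - D` anticommutes
with `i`, which gives `B G + G B = t B` and `B² = -c` with `c = (x₂ - z₀)² + (x₃ - z₁)²`.
These relations alone force `(G⁻¹ B)² = -c/δ`, since `G⁻¹ = (t - G)/δ` and `B (t - G) = G B`.
Finally `⟪∂_y f, ∂_z f⟫ = -⟪i x, z⟫`, so the hypothesis kills the last term of `δ`.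
-/

open Matrix

theorem Ring.inverse_mul_mul_inverse_mul_eq_smul_one {𝕜 R : Type*} [Field 𝕜] [Ring R]
    [Algebra 𝕜 R] {G B : R} {t d c : 𝕜} (hd : d ≠ 0) (hG : G * G = t • G - d • 1)
    (hBG : B * G + G * B = t • B) (hB : B * B = -c • 1) :
    Ring.inverse G * B * (Ring.inverse G * B) = -(c / d) • 1 := by
  set H := t • (1 : R) - G
  have hGH : G * H = d • 1 := by
    simp only [H, mul_sub, mul_smul_comm, mul_one, hG, sub_sub_cancel]
  have hHG : H * G = d • 1 := by
    simp only [H, sub_mul, smul_mul_assoc, one_mul, hG, sub_sub_cancel]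
  have hBH : B * H = G * B := by
    simp only [H, mul_sub, mul_smul_comm, mul_one, ← hBG, add_sub_cancel_left]
  have hinv : Ring.inverse G = d⁻¹ • H := by
    refine Ring.inverse_unit ⟨G, d⁻¹ • H, ?_, ?_⟩ <;>
      simp only [mul_smul_comm, smul_mul_assoc, hGH, hHG, smul_smul, inv_mul_cancel₀ hd, one_smul]
  calc Ring.inverse G * B * (Ring.inverse G * B)
      = (d⁻¹ * d⁻¹) • (H * G * (B * B)) := by
        simp only [hinv, smul_mul_assoc, mul_smul_comm, smul_smul, mul_assoc, ← mul_assoc B H, hBH]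
    _ = -(c / d) • 1 := by
        rw [hHG, hB, smul_mul_smul_comm, one_mul, smul_smul]
        congr 1
        field_simp

lemma inner_E4_eq (x z : E4) : ⟪x, z⟫ = x 0 * z 0 + x 1 * z 1 + x 2 * z 2 + x 3 * z 3 := by
  simp only [PiLp.inner_apply, RCLike.inner_apply, conj_trivial, Fin.sum_univ_four]
  ring

lemma norm_sq_E4_eq (x : E4) : ‖x‖ ^ 2 = x 0 ^ 2 + x 1 ^ 2 + x 2 ^ 2 + x 3 ^ 2 := by
  rw [← real_inner_self_eq_norm_sq, inner_E4_eq]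
  ring

lemma iC_apply (v : E4) : iC v = !₂[-v 1, v 0, -v 3, v 2] := by
  ext k
  fin_cases k <;> simp [iC, toLpLin_apply, dotProduct, Fin.sum_univ_four]

lemma iC_e_zero : iC (e 0) = e 1 := by
  ext k
  fin_cases k <;> simp [iC_apply, e]

lemma iC_e_two : iC (e 2) = e 3 := by
  ext k
  fin_cases k <;> simp [iC_apply, e]

lemma toEuclideanCLM_e_apply (M : Matrix (Fin 4) (Fin 4) ℝ) (j k : Fin 4) :
    toEuclideanCLM (𝕜 := ℝ) M (e j) k = M k j := by
  simp [e]

lemma adjoint_toEuclideanCLM {n : Type*} [Fintype n] [DecidableEq n] (M : Matrix n n ℝ) :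
    ContinuousLinearMap.adjoint (toEuclideanCLM (𝕜 := ℝ) M) = toEuclideanCLM (𝕜 := ℝ) Mᵀ := by
  rw [← ContinuousLinearMap.star_eq_adjoint, ← map_star, star_eq_conjTranspose,
    conjTranspose_eq_transpose_of_trivial]

def antiHolMatrix (x z : E4) : Matrix (Fin 4) (Fin 4) ℝ :=
  !![x 0, x 1, z 0, z 1; x 1, -x 0, z 1, -z 0; x 2, x 3, z 2, z 3; x 3, -x 2, z 3, -z 2]

lemma apply_e_one_of_anti {D : E4 →L[ℝ] E4} (hD : D ∘L iC = -(iC ∘L D)) :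
    D (e 1) = -iC (D (e 0)) := by
  simpa [iC_e_zero] using congr($hD (e 0))

lemma apply_e_three_of_anti {D : E4 →L[ℝ] E4} (hD : D ∘L iC = -(iC ∘L D)) :
    D (e 3) = -iC (D (e 2)) := by
  simpa [iC_e_two] using congr($hD (e 2))

lemma eq_toEuclideanCLM_antiHolMatrix {D : E4 →L[ℝ] E4} (hD : D ∘L iC = -(iC ∘L D)) :
    D = toEuclideanCLM (𝕜 := ℝ) (antiHolMatrix (D (e 0)) (D (e 2))) := by
  refine ContinuousLinearMap.coe_injective <|
    (EuclideanSpace.basisFun (Fin 4) ℝ).toBasis.ext fun j ↦ ?_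
  have hcol : ∀ j, (EuclideanSpace.basisFun (Fin 4) ℝ).toBasis j = e j := fun j ↦ by simp [e]
  simp only [ContinuousLinearMap.coe_coe, hcol]
  ext k
  fin_cases j <;> fin_cases k <;>
    simp [toEuclideanCLM_e_apply, antiHolMatrix, apply_e_one_of_anti hD,
      apply_e_three_of_anti hD, iC_apply]

section antiHolMatrix

variable (x z : E4)

def complexGramDet : ℝ := (1 + ‖x‖ ^ 2) * (1 + ‖z‖ ^ 2) - ⟪x, z⟫ ^ 2 - ⟪iC x, z⟫ ^ 2

lemma complexGramDet_pos : 0 < complexGramDet x z := by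
  -- Lagrange's identity on `ℂ²`: the squares are the real and imaginary parts of
  -- `(x₀ + i x₁)(z₂ + i z₃) - (x₂ + i x₃)(z₀ + i z₁)`.
  have hsos : complexGramDet x z = 1 + ‖x‖ ^ 2 + ‖z‖ ^ 2 +
      ((x 0 * z 2 - x 1 * z 3 - x 2 * z 0 + x 3 * z 1) ^ 2 +
        (x 0 * z 3 + x 1 * z 2 - x 2 * z 1 - x 3 * z 0) ^ 2) := by
    simp only [complexGramDet, norm_sq_E4_eq, inner_E4_eq, iC_apply, Fin.isValue,
      cons_val_zero, cons_val_one, cons_val, neg_mul]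
    ring
  rw [hsos]
  positivity

lemma antiHolMatrix_gram_sq :
    (1 + (antiHolMatrix x z)ᵀ * antiHolMatrix x z) * (1 + (antiHolMatrix x z)ᵀ * antiHolMatrix x z) =
      (2 + ‖x‖ ^ 2 + ‖z‖ ^ 2) • (1 + (antiHolMatrix x z)ᵀ * antiHolMatrix x z) -
        complexGramDet x z • 1 := by
  rw [complexGramDet, norm_sq_E4_eq, norm_sq_E4_eq, inner_E4_eq, inner_E4_eq, iC_apply]
  ext i j
  fin_cases i <;> fin_cases j <;>
    simp [antiHolMatrix, mul_apply, Fin.sum_univ_four, one_apply] <;> ring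

lemma antiHolMatrix_skew_anticomm_gram :
    ((antiHolMatrix x z)ᵀ - antiHolMatrix x z) * (1 + (antiHolMatrix x z)ᵀ * antiHolMatrix x z) +
        (1 + (antiHolMatrix x z)ᵀ * antiHolMatrix x z) * ((antiHolMatrix x z)ᵀ - antiHolMatrix x z) =
      (2 + ‖x‖ ^ 2 + ‖z‖ ^ 2) • ((antiHolMatrix x z)ᵀ - antiHolMatrix x z) := by
  rw [norm_sq_E4_eq, norm_sq_E4_eq]
  ext i j
  fin_cases i <;> fin_cases j <;>
    simp [antiHolMatrix, mul_apply, Fin.sum_univ_four] <;> ring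

lemma antiHolMatrix_skew_sq :
    ((antiHolMatrix x z)ᵀ - antiHolMatrix x z) * ((antiHolMatrix x z)ᵀ - antiHolMatrix x z) =
      -((x 2 - z 0) ^ 2 + (x 3 - z 1) ^ 2) • 1 := by
  ext i j
  fin_cases i <;> fin_cases j <;>
    simp [antiHolMatrix, mul_apply, Fin.sum_univ_four] <;> ring

end antiHolMatrix

theorem gram_inverse_mul_skew_sq_of_anti {D : E4 →L[ℝ] E4} (hD : D ∘L iC = -(iC ∘L D)) :
    Ring.inverse (1 + ContinuousLinearMap.adjoint D * D) * (ContinuousLinearMap.adjoint D - D) *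
        (Ring.inverse (1 + ContinuousLinearMap.adjoint D * D) * (ContinuousLinearMap.adjoint D - D)) =
      -(((D (e 0) 2 - D (e 2) 0) ^ 2 + (D (e 0) 3 - D (e 2) 1) ^ 2) /
        complexGramDet (D (e 0)) (D (e 2))) • 1 := by
  set x := D (e 0)
  set z := D (e 2)
  rw [eq_toEuclideanCLM_antiHolMatrix hD, adjoint_toEuclideanCLM]
  apply Ring.inverse_mul_mul_inverse_mul_eq_smul_one (t := 2 + ‖x‖ ^ 2 + ‖z‖ ^ 2)
    (complexGramDet_pos x z).ne'
  · simpa only [map_mul, map_add, map_sub, map_smul, map_one] using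
      congrArg (toEuclideanCLM (𝕜 := ℝ)) (antiHolMatrix_gram_sq x z)
  · simpa only [map_mul, map_add, map_sub, map_smul, map_one] using
      congrArg (toEuclideanCLM (𝕜 := ℝ)) (antiHolMatrix_skew_anticomm_gram x z)
  · simpa only [map_mul, map_sub, map_smul, map_one] using
      congrArg (toEuclideanCLM (𝕜 := ℝ)) (antiHolMatrix_skew_sq x z)

theorem stmt_4_general (f : E4 → E4)
    (hanti : ∀ p : E4, (fderiv ℝ f p) ∘L iC = -(iC ∘L fderiv ℝ f p))
    (p : E4)
    (h1 : ⟪fderiv ℝ f p (e 1), fderiv ℝ f p (e 2)⟫ = 0) :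
    Sp f p * Sp f p =
      -(((fderiv ℝ f p (e 0) 2 - fderiv ℝ f p (e 2) 0) ^ 2 +
          (fderiv ℝ f p (e 1) 2 - fderiv ℝ f p (e 3) 0) ^ 2) /
        ((1 + ‖fderiv ℝ f p (e 0)‖ ^ 2) * (1 + ‖fderiv ℝ f p (e 2)‖ ^ 2) -
          ⟪fderiv ℝ f p (e 0), fderiv ℝ f p (e 2)⟫ ^ 2)) • 1 := by
  have hD := hanti p
  rw [apply_e_one_of_anti hD, inner_neg_left, neg_eq_zero] at h1
  rw [Sp, gram_inverse_mul_skew_sq_of_anti hD, complexGramDet, h1, apply_e_one_of_anti hD,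
    apply_e_three_of_anti hD]
  simp [iC_apply, -neg_smul]

theorem stmt_4 (f : E4 → E4) (hdiff : Differentiable ℝ f)
    (hanti : ∀ p : E4, (fderiv ℝ f p) ∘L iC = -(iC ∘L fderiv ℝ f p))
    (p : E4)
    (h1 : ⟪fderiv ℝ f p (e 1), fderiv ℝ f p (e 2)⟫ = 0)
    (h2 : ⟪fderiv ℝ f p (e 0), fderiv ℝ f p (e 3)⟫ = 0) :
    Sp f p * Sp f p =
      -(((fderiv ℝ f p (e 0) 2 - fderiv ℝ f p (e 2) 0) ^ 2 +
          (fderiv ℝ f p (e 1) 2 - fderiv ℝ f p (e 3) 0) ^ 2) /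
        ((1 + ‖fderiv ℝ f p (e 0)‖ ^ 2) * (1 + ‖fderiv ℝ f p (e 2)‖ ^ 2) -
          ⟪fderiv ℝ f p (e 0), fderiv ℝ f p (e 2)⟫ ^ 2)) • 1 :=
  stmt_4_general f hanti p h1

end
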